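/- arXiv:1610.02602 — 2 statements merged into one kernel-verified Lean document; each statement's English description precedes it below -/
import Mathlib

section
/- Suppose p ∈ ℂ[z,w] is square free and inner toral. Let Λ be the set of all λ ∈ 𝔻 for which the one-variable polynomial p_λ(w) = p(λ,w) ∈ ℂ[w] has no repeated roots. Then Λ is a cofinite subset of 𝔻, i.e., 𝔻 ∖ Λ is finite. -/
noncomputable section

open MvPolynomial

/-- Polynomials in two variables `z, w` over `ℂ`. -/
abbrev CPoly2 : Type := MvPolynomial (Fin 2) ℂ

/-- Evaluation of a two-variable polynomial at `(z, w)`. -/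
def pevalAt (p : CPoly2) (z w : ℂ) : ℂ := eval ![z, w] p

/-- The zero set `Z(p) ⊆ ℂ²`. -/
def zeroSet (p : CPoly2) : Set (ℂ × ℂ) := {x | pevalAt p x.1 x.2 = 0}

/-- The open bidisk `𝔻²`. -/
def biDisk : Set (ℂ × ℂ) := {x | ‖x.1‖ < 1 ∧ ‖x.2‖ < 1}

/-- `𝔙(p) = Z(p) ∩ 𝔻²`. -/
def distVar (p : CPoly2) : Set (ℂ × ℂ) := zeroSet p ∩ biDisk

/-- A polynomial is inner toral if its zero set lies in `𝔻² ∪ 𝕋² ∪ 𝔼²`. -/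
def InnerToral (p : CPoly2) : Prop :=
  ∀ z w : ℂ, pevalAt p z w = 0 →
    (‖z‖ < 1 ∧ ‖w‖ < 1) ∨
    (‖z‖ = 1 ∧ ‖w‖ = 1) ∨
    (1 < ‖z‖ ∧ 1 < ‖w‖)

/-- `p` and `q` are relatively prime: no non-constant polynomial divides both. -/
def RelPrime (p q : CPoly2) : Prop :=
  ∀ d : CPoly2, d ∣ p → d ∣ q → d.totalDegree = 0

/-- `p` is square free: the square of a non-constant polynomial never divides `p`. -/
def SqFree (p : CPoly2) : Prop :=
  ∀ d : CPoly2, 0 < d.totalDegree → ¬ d * d ∣ p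

/-- `(λ, μ)` is a regular point for `p`: `p(λ,μ) = 0` and `∇p(λ,μ) ≠ 0`. -/
def IsRegularPoint (p : CPoly2) (x : ℂ × ℂ) : Prop :=
  pevalAt p x.1 x.2 = 0 ∧
    (eval ![x.1, x.2] (pderiv (0 : Fin 2) p) ≠ 0 ∨
     eval ![x.1, x.2] (pderiv (1 : Fin 2) p) ≠ 0)

/-- The one-variable polynomial `p_λ(w) = p(λ, w)`. -/
def pSlice (p : CPoly2) (lam : ℂ) : Polynomial ℂ :=
  MvPolynomial.aeval ![Polynomial.C lam, Polynomial.X] p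

section Ops

variable {H : Type*} [NormedAddCommGroup H] [NormedSpace ℂ H]

/-- For `q(z,w) = Σ c_{ij} z^i w^j`, `polyOp q S T = q(S,T) = Σ c_{ij} S^i T^j`. -/
def polyOp (q : CPoly2) (S T : H →L[ℂ] H) : H →L[ℂ] H :=
  ∑ m ∈ q.support, q.coeff m • (S ^ (m 0) * T ^ (m 1))

/-- A pure isometry: an isometry with `⋂ₙ Vⁿ(H) = {0}`. -/
def IsPureIsometry (S : H →L[ℂ] H) : Prop :=
  (∀ x : H, ‖S x‖ = ‖x‖) ∧ (⋂ n : ℕ, Set.range (⇑(S ^ (n + 1)))) = ({0} : Set H)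

/-- A pure `p`-isopair: a commuting pair of pure isometries annihilated by `p`. -/
def IsPureIsopair (p : CPoly2) (S T : H →L[ℂ] H) : Prop :=
  Commute S T ∧ IsPureIsometry S ∧ IsPureIsometry T ∧ polyOp p S T = 0

/-- The set `{Σ_j q_j(S,T) f_j : q_j ∈ ℂ[z,w]}`. -/
def cyclicSet (S T : H →L[ℂ] H) {k : ℕ} (f : Fin k → H) : Set H :=
  {x | ∃ q : Fin k → CPoly2, x = ∑ j, polyOp (q j) S T (f j)}

/-- `(S,T)` is `k`-cyclic: some `f_1, …, f_k` have `closure {Σ q_j(S,T) f_j} = H`. -/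
def IsKCyclic (S T : H →L[ℂ] H) (k : ℕ) : Prop :=
  ∃ f : Fin k → H, closure (cyclicSet S T f) = Set.univ

/-- `(S,T)` is at most nearly `k`-cyclic: some `f_1, …, f_k` have
`closure {Σ q_j(S,T) f_j}` of finite codimension in `H`. -/
def AtMostNearlyKCyclic (S T : H →L[ℂ] H) (k : ℕ) : Prop :=
  ∃ f : Fin k → H,
    FiniteDimensional ℂ (H ⧸ (Submodule.span ℂ (cyclicSet S T f)).topologicalClosure)

/-- `(S,T)` is nearly `k`-cyclic: at most nearly `k`-cyclic but not `k'` for `k' < k`. -/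
def NearlyKCyclic (S T : H →L[ℂ] H) (k : ℕ) : Prop :=
  AtMostNearlyKCyclic S T k ∧ ∀ k' < k, ¬ AtMostNearlyKCyclic S T k'

/-- Restriction of a continuous linear operator to an invariant subspace. -/
def clmRestrict (S : H →L[ℂ] H) (E : Submodule ℂ H) (h : ∀ x ∈ E, S x ∈ E) : E →L[ℂ] E :=
  { toLinearMap := (S : H →ₗ[ℂ] H).restrict h
    cont := by exact Continuous.subtype_mk (S.continuous.comp continuous_subtype_val) _ }

end Ops

/-- Unitary equivalence of pairs: a unitary `U` with `U S₁ = S₂ U` and `U T₁ = T₂ U`. -/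
def UnitarilyEquivPairs {H1 H2 : Type*} [NormedAddCommGroup H1] [NormedSpace ℂ H1]
    [NormedAddCommGroup H2] [NormedSpace ℂ H2]
    (S1 T1 : H1 →L[ℂ] H1) (S2 T2 : H2 →L[ℂ] H2) : Prop :=
  ∃ U : H1 ≃ₗᵢ[ℂ] H2, (∀ x, U (S1 x) = S2 (U x)) ∧ (∀ x, U (T1 x) = T2 (U x))

section Hilbert

variable {H : Type*} [NormedAddCommGroup H] [InnerProductSpace ℂ H] [CompleteSpace H]

/-- The multiplicity of an isometry: `dim ker V*`. -/
def multiplicity' (S : H →L[ℂ] H) : Cardinal :=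
  Module.rank ℂ (LinearMap.ker (ContinuousLinearMap.adjoint S : H →ₗ[ℂ] H))

/-- Finite bimultiplicity: both `mult S` and `mult T` are finite. -/
def FiniteBimult (S T : H →L[ℂ] H) : Prop :=
  multiplicity' S < Cardinal.aleph0 ∧ multiplicity' T < Cardinal.aleph0

/-- `dim (ker (S - λ)* ∩ ker (T - μ)*)`. -/
def jointKerDim (S T : H →L[ℂ] H) (lam mu : ℂ) : Cardinal :=
  Module.rank ℂ
    ↥(LinearMap.ker (ContinuousLinearMap.adjoint (S - lam • 1) : H →ₗ[ℂ] H) ⊓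
      LinearMap.ker (ContinuousLinearMap.adjoint (T - mu • 1) : H →ₗ[ℂ] H))

/-- `(S,T)` has rank `α`: for each `j` and every regular point `(λ,μ)` of `p` in `𝔙(p_j)`,
`dim (ker (S-λ)* ∩ ker (T-μ)*) = α_j`. -/
def HasRank (p : CPoly2) {s : ℕ} (ps : Fin s → CPoly2) (S T : H →L[ℂ] H)
    (α : Fin s → ℕ) : Prop :=
  ∀ j : Fin s, ∀ x : ℂ × ℂ, x ∈ distVar (ps j) → IsRegularPoint p x →
    jointKerDim S T x.1 x.2 = (α j : Cardinal)

/-- Rank for an isopair attached to a single irreducible polynomial. -/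
def HasRankIrred (p : CPoly2) (S T : H →L[ℂ] H) (a : ℕ) : Prop :=
  ∀ x : ℂ × ℂ, x ∈ distVar p → IsRegularPoint p x →
    jointKerDim S T x.1 x.2 = (a : Cardinal)

end Hilbert

/-- A pair of operators acting on some complex Hilbert space. -/
structure HilbertPair where
  space : Type*
  [nacg : NormedAddCommGroup space]
  [ips : InnerProductSpace ℂ space]
  [cs : CompleteSpace space]
  S : space →L[ℂ] space
  T : space →L[ℂ] space

attribute [instance] HilbertPair.nacg HilbertPair.ips HilbertPair.cs

/-! Regard `p` as a polynomial in `w` over `ℂ[z]`. Square-freeness survives the passage to the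
fraction field `ℂ(z)` (radicality is preserved under localization), and there, in characteristic
zero, it means that `p` and `∂p/∂w` are coprime. Clearing denominators in a Bézout identity gives
`a p + b ∂p/∂w = r(z)` with `0 ≠ r ∈ ℂ[z]`, so for every `λ` off the finitely many roots of `r`
the specialisation `p_λ` is coprime to its derivative and has only simple roots. -/

open Polynomial

theorem Squarefree.map_mulEquiv {M N : Type*} [Monoid M] [Monoid N] (e : M ≃* N) {x : M}
    (hx : Squarefree x) : Squarefree (e x) := fun d hd => by
  simpa using (hx (e.symm d) (by simpa using map_dvd e.symm hd)).map e

theorem isCoprime_iff_span_pair_eq_top {R : Type*} [CommRing R] {x y : R} :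
    IsCoprime x y ↔ Ideal.span {x, y} = ⊤ := by
  rw [IsCoprime, ← Ideal.mem_span_pair, ← Ideal.eq_top_iff_one]

namespace IsLocalization

variable {R S : Type*} [CommRing R] [CommRing S] [Algebra R S] (M : Submonoid R)
  [IsLocalization M S]

include M in
theorem isRadical_algebraMap {x : R} (hx : IsRadical x) : IsRadical (algebraMap R S x) := by
  rw [isRadical_iff_span_singleton] at hx ⊢
  have hmap := IsLocalization.map_radical M S (Ideal.span {x})
  rw [hx.radical, Ideal.map_span, Set.image_singleton] at hmap
  exact hmap.ge

theorem exists_mem_of_map_eq_top {I : Ideal R} (hI : I.map (algebraMap R S) = ⊤) :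
    ∃ m ∈ M, m ∈ I := by
  obtain ⟨⟨⟨a, ha⟩, ⟨m, hm⟩⟩, h⟩ :=
    (mem_map_algebraMap_iff M S).mp (hI ▸ Submodule.mem_top : (1 : S) ∈ I.map (algebraMap R S))
  obtain ⟨⟨c, hc⟩, hcma⟩ := (eq_iff_exists M S).mp (by simpa using h)
  exact ⟨c * m, M.mul_mem hc hm, hcma ▸ I.mul_mem_left c ha⟩

end IsLocalization

namespace Polynomial

variable {R : Type*} [CommRing R]

theorem separable_map_of_C_mem_span {S : Type*} [CommRing S] (φ : R →+* S) {f : R[X]} {r : R}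
    (hr : C r ∈ Ideal.span {f, derivative f}) (hφr : IsUnit (φ r)) : (f.map φ).Separable := by
  have hmem : C (φ r) ∈ Ideal.span {f.map φ, derivative (f.map φ)} := by
    simpa [Ideal.map_span, Set.image_pair, derivative_map] using
      Ideal.mem_map_of_mem (mapRingHom φ) hr
  exact isCoprime_iff_span_pair_eq_top.mpr (Ideal.eq_top_of_isUnit_mem _ hmem (hφr.map C))

theorem exists_C_mem_span_of_separable_map {S : Type*} [CommRing S] [Algebra R S]
    (M : Submonoid R) [IsLocalization M S] {f : R[X]} (hf : (f.map (algebraMap R S)).Separable) :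
    ∃ r ∈ M, C r ∈ Ideal.span {f, derivative f} := by
  let := Polynomial.algebra R S
  have := Polynomial.isLocalization M S
  have htop : (Ideal.span {f, derivative f}).map (algebraMap R[X] S[X]) = ⊤ := by
    rw [Ideal.map_span, Set.image_pair, ← isCoprime_iff_span_pair_eq_top]
    change IsCoprime (f.map _) ((derivative f).map _)
    rwa [← derivative_map]
  obtain ⟨_, ⟨r, hr, rfl⟩, hmem⟩ := IsLocalization.exists_mem_of_map_eq_top (M.map C) htop
  exact ⟨r, hr, hmem⟩

variable [IsDomain R] [UniqueFactorizationMonoid R]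

theorem squarefree_map_fractionRing {f : R[X]} (hf : Squarefree f) :
    Squarefree (f.map (algebraMap R (FractionRing R))) := by
  let := Polynomial.algebra R (FractionRing R)
  have := Polynomial.isLocalization (nonZeroDivisors R) (FractionRing R)
  have hne : f.map (algebraMap R (FractionRing R)) ≠ 0 :=
    (Polynomial.map_ne_zero_iff (IsFractionRing.injective R _)).mpr hf.ne_zero
  exact ((IsLocalization.isRadical_algebraMap (S := (FractionRing R)[X])
    ((nonZeroDivisors R).map C) hf.isRadical).squarefree hne)

theorem exists_separable_map_of_squarefree [PerfectField (FractionRing R)] {f : R[X]}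
    (hf : Squarefree f) : ∃ r ≠ (0 : R), ∀ {F : Type*} [Field F] (φ : R →+* F), φ r ≠ 0 →
      (f.map φ).Separable := by
  have hsep := PerfectField.separable_iff_squarefree.mpr (squarefree_map_fractionRing hf)
  obtain ⟨r, hr, hmem⟩ := exists_C_mem_span_of_separable_map (nonZeroDivisors R) hsep
  exact ⟨r, nonZeroDivisors.ne_zero hr, fun φ hφr => separable_map_of_C_mem_span φ hmem
    (isUnit_iff_ne_zero.mpr hφr)⟩

end Polynomial

theorem SqFree.squarefree {p : CPoly2} (hp : SqFree p) : Squarefree p := by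
  have hp0 : p ≠ 0 := by
    rintro rfl
    exact hp (X 0) (by simp [totalDegree_X]) (dvd_zero _)
  intro d hd
  have hdeg : d.totalDegree = 0 := by
    by_contra h
    exact hp d (Nat.pos_of_ne_zero h) hd
  rw [isUnit_iff_totalDegree_of_isReduced, isUnit_iff_ne_zero]
  refine ⟨fun h0 => hp0 ?_, hdeg⟩
  rwa [totalDegree_eq_zero_iff_eq_C.mp hdeg, h0, MvPolynomial.C_0, zero_mul, zero_dvd_iff] at hd

theorem pSlice_eq_map (p : CPoly2) (lam : ℂ) :
    pSlice p lam = ((Bivariate.equivMvPolynomial ℂ).symm p).map (evalRingHom lam) := by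
  have h : (Polynomial.mapAlgHom (Polynomial.aeval lam)).comp
      (Bivariate.equivMvPolynomial ℂ).symm.toAlgHom =
        MvPolynomial.aeval ![Polynomial.C lam, Polynomial.X] := by
    apply MvPolynomial.algHom_ext
    intro i
    fin_cases i <;> simp
  exact (DFunLike.congr_fun h p).symm

theorem exists_forall_separable_pSlice {p : CPoly2} (hp : Squarefree p) :
    ∃ r : ℂ[X], r ≠ 0 ∧ ∀ lam, ¬ r.IsRoot lam → (pSlice p lam).Separable := by
  obtain ⟨r, hr0, hsep⟩ := exists_separable_map_of_squarefree
    (hp.map_mulEquiv (Bivariate.equivMvPolynomial ℂ).symm.toMulEquiv)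
  refine ⟨r, hr0, fun lam hlam => ?_⟩
  rw [pSlice_eq_map]
  exact hsep (evalRingHom lam) hlam

theorem statement6_general (p : CPoly2) (hsf : SqFree p) :
    ({lam : ℂ | ‖lam‖ < 1} \
      {lam : ℂ | ‖lam‖ < 1 ∧
        ∀ mu : ℂ, Polynomial.rootMultiplicity mu (pSlice p lam) ≤ 1}).Finite := by
  obtain ⟨r, hr0, hsep⟩ := exists_forall_separable_pSlice hsf.squarefree
  refine (finite_setOfPred_isRoot hr0).subset ?_
  rintro lam ⟨hlam, hbad⟩
  by_contra hroot
  exact hbad ⟨hlam, rootMultiplicity_le_one_of_separable (hsep lam hroot)⟩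

/-- the set of `λ ∈ 𝔻` for which `p_λ(w)` has no repeated roots is
cofinite in `𝔻`. -/
theorem statement6 (p : CPoly2) (hsf : SqFree p) (hit : InnerToral p) :
    ({lam : ℂ | ‖lam‖ < 1} \
      {lam : ℂ | ‖lam‖ < 1 ∧
        ∀ mu : ℂ, Polynomial.rootMultiplicity mu (pSlice p lam) ≤ 1}).Finite :=
  statement6_general p hsf
end
end

section
/- Let p ∈ ℂ[z,w] be square free and inner toral. If V = (S,T) is a k-cyclic pure p-isopair of finite bimultiplicity, then for each (λ,μ) ∈ 𝔙(p), dim(ker(S−λ)* ∩ ker(T−μ)*) ≤ k. In particular, if p has distinct irreducible factors p_1, …, p_s and V has rank α = (α_1, …, α_s), then k ≥ max{α_1, …, α_s}. -/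
noncomputable section

open MvPolynomial

/-!
The bound on joint eigenspaces is elementary: if `S* g = λ̄ g` and `T* g = μ̄ g`, then
`⟪q(S,T) u, g⟫ = conj (q(λ,μ)) ⟪u, g⟫`, so a joint eigenvector orthogonal to the `k` cyclic
vectors is orthogonal to a dense set; hence `g ↦ (⟪f_j, g⟫)_j` embeds the joint eigenspace
into `ℂᵏ`.

The bound `α_j ≤ k` needs a regular point of `p` on `𝔙(p_j)`. Write `p = q r` with `q = p_j`
irreducible and `q ∤ r` (square freeness), and view `q` as a polynomial in `w` over `ℂ[z]`.
Inner torality forbids a factor of `p` depending on `z` alone, so `q` has positive `w`-degree;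
then `q` is coprime to `r ∂q/∂w`, their resultant in `ℂ[z]` is nonzero, and for all but finitely
many `z` in the disk some root `w` of `q(z, ·)` has `∂p/∂w (z, w) = r ∂q/∂w ≠ 0`. Inner torality
places that `w` in the disk as well.
-/

open scoped Polynomial.Bivariate

namespace Polynomial

theorem resultant_ne_zero_of_irreducible_of_not_dvd {R : Type*} [CommRing R] [IsDomain R]
    [IsGCDMonoid R] {f g : R[X]} (hf : Irreducible f) (hdeg : f.natDegree ≠ 0)
    (hfg : ¬f ∣ g) : resultant f g ≠ 0 := by
  have hinj := IsFractionRing.injective R (FractionRing R)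
  have hprim := hf.isPrimitive hdeg
  have hcop : IsCoprime (f.map (algebraMap R (FractionRing R)))
      (g.map (algebraMap R (FractionRing R))) :=
    (hprim.irreducible_iff_irreducible_map_fraction_map.mp hf).coprime_iff_not_dvd.mpr
      fun h => hfg (hprim.dvd_of_fraction_map_dvd_fraction_map h)
  have := resultant_ne_zero _ _ hcop
  rwa [natDegree_map_eq_of_injective hinj, natDegree_map_eq_of_injective hinj,
    resultant_map_map, map_ne_zero_iff _ hinj] at this

variable {K : Type*} [Field K] [IsAlgClosed K]

theorem exists_evalEval_eq_zero_ne_zero_of_resultant_ne_zero {Q H : K[X][Y]}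
    (hdeg : Q.natDegree ≠ 0) (hres : resultant Q H ≠ 0) {D : Set K} (hD : D.Infinite) :
    ∃ x ∈ D, ∃ y, Q.evalEval x y = 0 ∧ H.evalEval x y ≠ 0 := by
  have hQ : Q ≠ 0 := by rintro rfl; simp at hdeg
  obtain ⟨u, v, -, -, huv⟩ := exists_mul_add_mul_eq_C_resultant Q H le_rfl le_rfl (Or.inl hdeg)
  obtain ⟨x, hxD, hx⟩ := hD.exists_notMem_finite ((finite_setOfPred_isRoot hres).union
    (finite_setOfPred_isRoot (leadingCoeff_ne_zero.mpr hQ)))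
  simp only [Set.mem_union, not_or] at hx
  obtain ⟨y, hy⟩ := IsAlgClosed.exists_root (Q.map (evalRingHom x)) (by
    rw [degree_map_eq_of_leadingCoeff_ne_zero (evalRingHom x) hx.2, degree_eq_natDegree hQ]
    exact_mod_cast hdeg)
  rw [IsRoot.def, map_evalRingHom_eval] at hy
  refine ⟨x, hxD, y, hy, fun hH => hx.1 ?_⟩
  simpa [hy, hH, evalEval_C] using congrArg (evalEval x y) huv.symm

theorem exists_evalEval_eq_zero_derivative_mul_ne_zero [CharZero K] {Q R : K[X][Y]}
    (hQ : Irreducible Q) (hdeg : Q.natDegree ≠ 0) (hQR : ¬Q ∣ R) {D : Set K}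
    (hD : D.Infinite) :
    ∃ x ∈ D, ∃ y, Q.evalEval x y = 0 ∧ (derivative (Q * R)).evalEval x y ≠ 0 := by
  have hQ' : ¬Q ∣ derivative Q := by
    rw [dvd_derivative_iff]
    exact fun h => hdeg (derivative_eq_zero.mp h)
  have hres : resultant Q (derivative Q * R) ≠ 0 :=
    resultant_ne_zero_of_irreducible_of_not_dvd hQ hdeg fun h =>
      (hQ.prime.dvd_or_dvd h).elim hQ' hQR
  obtain ⟨x, hx, y, hQxy, hxy⟩ := exists_evalEval_eq_zero_ne_zero_of_resultant_ne_zero hdeg hres hD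
  refine ⟨x, hx, y, hQxy, ?_⟩
  simpa [derivative_mul, hQxy] using hxy

end Polynomial

theorem MvPolynomial.totalDegree_pos_of_irreducible {σ K : Type*} [Field K]
    {q : MvPolynomial σ K} (hq : Irreducible q) : 0 < q.totalDegree := by
  rw [Nat.pos_iff_ne_zero, Ne, totalDegree_eq_zero_iff_eq_C]
  intro h
  rw [h] at hq
  exact hq.not_isUnit ((IsUnit.mk0 _ fun h0 => hq.ne_zero (by rw [h0, map_zero])).map C)

section InnerToral

open Polynomial Polynomial.Bivariate

theorem pevalAt_equivMvPolynomial (f : ℂ[X][Y]) (z w : ℂ) :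
    pevalAt (equivMvPolynomial ℂ f) z w = f.evalEval z w := by
  have h : (MvPolynomial.aeval ![z, w]).comp
      (equivMvPolynomial ℂ : ℂ[X][Y] →ₐ[ℂ] CPoly2) = aevalAeval z w := by
    ext <;> simp
  rw [← coe_aevalAeval_eq_evalEval, ← h]
  rfl

theorem InnerToral.exists_pevalAt_ne_zero {p : CPoly2} (hp : InnerToral p) (z : ℂ) :
    ∃ w, pevalAt p z w ≠ 0 := by
  by_contra! h
  -- `w = 0` forces `‖z‖ < 1`, while `w = 2` forces `1 < ‖z‖`.
  have h0 := hp z 0 (h 0)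
  have h2 := hp z 2 (h 2)
  norm_num at h0 h2
  linarith

theorem InnerToral.natDegree_symm_equivMvPolynomial_ne_zero {p q : CPoly2}
    (hp : InnerToral p) (hq : Irreducible q) (hqp : q ∣ p) :
    ((equivMvPolynomial ℂ).symm q).natDegree ≠ 0 := by
  intro h
  obtain ⟨b, hb⟩ := natDegree_eq_zero.mp h
  have hb' : Irreducible (Polynomial.C b) :=
    hb ▸ (MulEquiv.irreducible_iff (equivMvPolynomial ℂ).symm).mpr hq
  obtain ⟨z, hz⟩ := Complex.exists_root (degree_pos_of_ne_zero_of_nonunit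
    (fun h0 => hb'.ne_zero (by rw [h0, map_zero])) fun hu => hb'.not_isUnit (hu.map Polynomial.C))
  obtain ⟨w, hw⟩ := hp.exists_pevalAt_ne_zero z
  obtain ⟨r, rfl⟩ := hqp
  apply hw
  rw [← (equivMvPolynomial ℂ).apply_symm_apply (q * r), pevalAt_equivMvPolynomial, map_mul,
    evalEval_mul, ← hb, evalEval_C, hz, zero_mul]

theorem InnerToral.exists_isRegularPoint_mem_distVar {p q : CPoly2} (hp : InnerToral p)
    (hq : Irreducible q) (hqp : q ∣ p) (hsq : ¬q * q ∣ p) :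
    ∃ x ∈ distVar q, IsRegularPoint p x := by
  set e := equivMvPolynomial ℂ
  have hdeg := hp.natDegree_symm_equivMvPolynomial_ne_zero hq hqp
  obtain ⟨r, rfl⟩ := hqp
  have hQ : Irreducible (e.symm q) := (MulEquiv.irreducible_iff e.symm).mpr hq
  have hQR : ¬e.symm q ∣ e.symm r :=
    fun h => hsq (mul_dvd_mul_left q (by simpa using map_dvd e h))
  have hball : (Metric.ball (0 : ℂ) 1).Infinite :=
    infinite_of_mem_nhds 0 (Metric.ball_mem_nhds 0 one_pos)
  obtain ⟨z, hz, w, hqzw, hpzw'⟩ :=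
    exists_evalEval_eq_zero_derivative_mul_ne_zero hQ hdeg hQR hball
  rw [← pevalAt_equivMvPolynomial, e.apply_symm_apply] at hqzw
  have hpzw : pevalAt (q * r) z w = 0 := by
    rw [pevalAt, map_mul, ← pevalAt, hqzw, zero_mul]
  have hz1 : ‖z‖ < 1 := mem_ball_zero_iff.mp hz
  have hw1 : ‖w‖ < 1 := by
    rcases hp z w hpzw with h | h | h
    · exact h.2
    · linarith [h.1]
    · linarith [h.1]
  refine ⟨(z, w), ⟨hqzw, hz1, hw1⟩, hpzw, Or.inr ?_⟩
  rwa [← pevalAt_equivMvPolynomial, ← pderiv_one_equivMvPolynomial, ← map_mul,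
    e.apply_symm_apply] at hpzw'

end InnerToral

section JointEigenvectors

open scoped InnerProductSpace ComplexConjugate

variable {H : Type*} [NormedAddCommGroup H] [InnerProductSpace ℂ H]

theorem inner_apply_eq_of_mem_ker_adjoint_sub_smul [CompleteSpace H] {A : H →L[ℂ] H} {c : ℂ}
    {g : H} (hg : g ∈ LinearMap.ker (ContinuousLinearMap.adjoint (A - c • 1) : H →ₗ[ℂ] H))
    (u : H) : ⟪A u, g⟫_ℂ = conj c * ⟪u, g⟫_ℂ := by
  have hg' : ContinuousLinearMap.adjoint (A - c • 1) g = 0 := hg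
  have h : ⟪(A - c • 1) u, g⟫_ℂ = 0 := by
    rw [← ContinuousLinearMap.adjoint_inner_right, hg', inner_zero_right]
  rwa [sub_apply, smul_apply, one_apply_eq_self, inner_sub_left, inner_smul_left,
    sub_eq_zero] at h

theorem inner_pow_apply_eq {A : H →L[ℂ] H} {c : ℂ} {g : H}
    (hA : ∀ u, ⟪A u, g⟫_ℂ = c * ⟪u, g⟫_ℂ) (n : ℕ) (u : H) :
    ⟪(A ^ n) u, g⟫_ℂ = c ^ n * ⟪u, g⟫_ℂ := by
  induction n generalizing u with
  | zero => simp
  | succ n ih => rw [pow_succ, mul_apply_eq_comp, ih, hA, pow_succ, mul_assoc]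

theorem inner_polyOp_apply_eq {S T : H →L[ℂ] H} {lam mu : ℂ} {g : H}
    (hS : ∀ u, ⟪S u, g⟫_ℂ = conj lam * ⟪u, g⟫_ℂ) (hT : ∀ u, ⟪T u, g⟫_ℂ = conj mu * ⟪u, g⟫_ℂ)
    (q : CPoly2) (u : H) :
    ⟪polyOp q S T u, g⟫_ℂ = conj (pevalAt q lam mu) * ⟪u, g⟫_ℂ := by
  rw [pevalAt, eval_eq', map_sum, Finset.sum_mul, polyOp, sum_apply, sum_inner]
  refine Finset.sum_congr rfl fun m _ => ?_
  rw [smul_apply, mul_apply_eq_comp, inner_smul_left, inner_pow_apply_eq hS,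
    inner_pow_apply_eq hT, Fin.prod_univ_two]
  simp only [Matrix.cons_val_zero, Matrix.cons_val_one, map_mul, map_pow]
  ring

theorem jointKerDim_le_of_isKCyclic [CompleteSpace H] {S T : H →L[ℂ] H} {k : ℕ}
    (hcyc : IsKCyclic S T k) (lam mu : ℂ) : jointKerDim S T lam mu ≤ k := by
  obtain ⟨f, hf⟩ := hcyc
  set E := LinearMap.ker (ContinuousLinearMap.adjoint (S - lam • 1) : H →ₗ[ℂ] H) ⊓
    LinearMap.ker (ContinuousLinearMap.adjoint (T - mu • 1) : H →ₗ[ℂ] H)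
  let L : E →ₗ[ℂ] Fin k → ℂ := LinearMap.pi fun j => (innerₛₗ ℂ (f j)).comp E.subtype
  have hL : Function.Injective L := by
    rw [← LinearMap.ker_eq_bot, Submodule.eq_bot_iff]
    intro g hg
    have hfg : ∀ j, ⟪f j, (g : H)⟫_ℂ = 0 := fun j => congrFun hg j
    refine Subtype.ext ((dense_iff_closure_eq.mpr hf).eq_zero_of_inner_right ℂ
      fun _ ⟨q, hq⟩ => ?_)
    simp only [hq, sum_inner, inner_polyOp_apply_eq
      (inner_apply_eq_of_mem_ker_adjoint_sub_smul g.2.1)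
      (inner_apply_eq_of_mem_ker_adjoint_sub_smul g.2.2), hfg, mul_zero, Finset.sum_const_zero]
  have := LinearMap.lift_rank_le_of_injective L hL
  rw [rank_fin_fun, Cardinal.lift_natCast] at this
  exact Cardinal.lift_le_nat_iff.mp this

end JointEigenvectors

theorem statement14_general {H : Type*} [NormedAddCommGroup H] [InnerProductSpace ℂ H]
    [CompleteSpace H] {s : ℕ} (p : CPoly2) (ps : Fin s → CPoly2)
    (hsf : SqFree p) (hit : InnerToral p)
    (hirr : ∀ j, Irreducible (ps j)) (hprod : p = ∏ j, ps j)
    (S T : H →L[ℂ] H) (k : ℕ)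
    (hcyc : IsKCyclic S T k) :
    (∀ x ∈ distVar p, jointKerDim S T x.1 x.2 ≤ (k : Cardinal)) ∧
    (∀ α : Fin s → ℕ, HasRank p ps S T α → ∀ j, α j ≤ k) := by
  refine ⟨fun x _ => jointKerDim_le_of_isKCyclic hcyc x.1 x.2, fun α hα j => ?_⟩
  have hdvd : ps j ∣ p := hprod ▸ Finset.dvd_prod_of_mem ps (Finset.mem_univ j)
  obtain ⟨x, hx, hreg⟩ := hit.exists_isRegularPoint_mem_distVar (hirr j) hdvd
    (hsf _ (totalDegree_pos_of_irreducible (hirr j)))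
  exact_mod_cast hα j x hx hreg ▸ jointKerDim_le_of_isKCyclic hcyc x.1 x.2

/-- for a `k`-cyclic pure `p`-isopair of finite bimultiplicity,
`dim (ker (S-λ)* ∩ ker (T-μ)*) ≤ k` on `𝔙(p)`; in particular `k ≥ max α` whenever
`V` has rank `α`. -/
theorem statement14 {H : Type*} [NormedAddCommGroup H] [InnerProductSpace ℂ H]
    [CompleteSpace H] {s : ℕ} (p : CPoly2) (ps : Fin s → CPoly2)
    (hsf : SqFree p) (hit : InnerToral p)
    (hirr : ∀ j, Irreducible (ps j)) (hprod : p = ∏ j, ps j)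
    (hdist : ∀ i j : Fin s, i ≠ j → ps i ≠ ps j)
    (S T : H →L[ℂ] H) (k : ℕ)
    (hV : IsPureIsopair p S T) (hfin : FiniteBimult S T) (hcyc : IsKCyclic S T k) :
    (∀ x ∈ distVar p, jointKerDim S T x.1 x.2 ≤ (k : Cardinal)) ∧
    (∀ α : Fin s → ℕ, HasRank p ps S T α → ∀ j, α j ≤ k) :=
  statement14_general p ps hsf hit hirr hprod S T k hcyc
end
end
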